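/- arXiv:1902.01792 — 6 statements merged into one kernel-verified Lean document; each statement's English description precedes it below -/
import Mathlib

section
/- Let γ>1 and v₋>0. There exists a constant c₁>0 (depending only on γ and v₋) such that for every w with 0<w<v₋ and every v with 0<v≤3v₋, one has Q(v|w) ≥ c₁|v−w|². -/
/-- Pressure `p(v) = v^(-γ)`. -/
noncomputable def pres (γ v : ℝ) : ℝ := v ^ (-γ)

/-- `Q(v) = v^(1-γ)/(γ-1)`. -/
noncomputable def Qf (γ v : ℝ) : ℝ := v ^ (1 - γ) / (γ - 1)

/-- Relative functional `Q(v|w) = Q(v) - Q(w) - Q'(w)(v-w)` with `Q'(w) = -p(w)`. -/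
noncomputable def Qrel (γ v w : ℝ) : ℝ := Qf γ v - Qf γ w + pres γ w * (v - w)

/- On `(0, M]` the convex function `Q` has `Q''(x) = γ x^(-γ-1) ≥ γ M^(-γ-1)`, so `Q` is strongly
convex there and its Bregman divergence `Q(v|w)` is at least `γ M^(-γ-1) / 2 · |v - w|²`.
Take `M = 3 v₋`, which bounds both `v` and `w`. -/

theorem ConvexOn.add_mul_sub_le_of_hasDerivAt {S : Set ℝ} {f : ℝ → ℝ} {f' x y : ℝ}
    (hfc : ConvexOn ℝ S f) (hx : x ∈ S) (hy : y ∈ S) (hf : HasDerivAt f f' x) :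
    f x + f' * (y - x) ≤ f y := by
  rcases lt_trichotomy x y with hxy | rfl | hyx
  · have h := hfc.le_slope_of_hasDerivAt hx hy hxy hf
    rw [slope_def_field, le_div_iff₀ (sub_pos.mpr hxy)] at h
    linarith
  · simp
  · have h := hfc.slope_le_of_hasDerivAt hy hx hyx hf
    rw [slope_def_field, div_le_iff₀ (sub_pos.mpr hyx)] at h
    linarith

theorem half_mul_sq_le_sub_sub_of_le_deriv2 {D : Set ℝ} (hD : Convex ℝ D)
    {f f' f'' : ℝ → ℝ} {m : ℝ} (hf : ∀ x ∈ D, HasDerivAt f (f' x) x)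
    (hf' : ∀ x ∈ D, HasDerivAt f' (f'' x) x) (hm : ∀ x ∈ D, m ≤ f'' x)
    {x y : ℝ} (hx : x ∈ D) (hy : y ∈ D) :
    m / 2 * (y - x) ^ 2 ≤ f y - f x - f' x * (y - x) := by
  have hg : ∀ z ∈ D, HasDerivAt (fun t => f t - m / 2 * t ^ 2) (f' z - m * z) z := fun z hz => by
    refine ((hf z hz).fun_sub ((hasDerivAt_pow 2 z).const_mul (m / 2))).congr_deriv ?_
    norm_num
    ring
  have hg' : ∀ z ∈ D, HasDerivAt (fun t => f' t - m * t) (f'' z - m) z := fun z hz => by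
    simpa using (hf' z hz).fun_sub ((hasDerivAt_id z).const_mul m)
  have hconv : ConvexOn ℝ D (fun t => f t - m / 2 * t ^ 2) :=
    convexOn_of_hasDerivWithinAt2_nonneg hD
      (fun z hz => (hg z hz).continuousAt.continuousWithinAt)
      (fun z hz => (hg z (interior_subset hz)).hasDerivWithinAt)
      (fun z hz => (hg' z (interior_subset hz)).hasDerivWithinAt)
      (fun z hz => sub_nonneg.mpr (hm z (interior_subset hz)))
  have := hconv.add_mul_sub_le_of_hasDerivAt hx hy (hg x hx)
  nlinarith

theorem hasDerivAt_pres (γ : ℝ) {x : ℝ} (hx : 0 < x) :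
    HasDerivAt (pres γ) (-γ * x ^ (-γ - 1)) x :=
  Real.hasDerivAt_rpow_const (Or.inl hx.ne')

theorem hasDerivAt_Qf {γ x : ℝ} (hγ : γ ≠ 1) (hx : 0 < x) :
    HasDerivAt (Qf γ) (-pres γ x) x := by
  have hγ' : γ - 1 ≠ 0 := sub_ne_zero.mpr hγ
  refine ((Real.hasDerivAt_rpow_const (p := 1 - γ) (Or.inl hx.ne')).div_const (γ - 1)).congr_deriv ?_
  rw [pres, show 1 - γ - 1 = -γ by ring]
  field_simp
  ring

theorem half_mul_sq_le_Qrel {γ M : ℝ} (hγ : 1 < γ) {v w : ℝ}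
    (hv : v ∈ Set.Ioc 0 M) (hw : w ∈ Set.Ioc 0 M) :
    γ * M ^ (-γ - 1) / 2 * (v - w) ^ 2 ≤ Qrel γ v w := by
  have key := half_mul_sq_le_sub_sub_of_le_deriv2 (convex_Ioc 0 M)
    (f := Qf γ) (f' := fun x => -pres γ x) (f'' := fun x => γ * x ^ (-γ - 1))
    (fun x hx => hasDerivAt_Qf hγ.ne' hx.1)
    (fun x hx => by simpa using (hasDerivAt_pres γ hx.1).fun_neg)
    (fun x hx => mul_le_mul_of_nonneg_left
      (Real.rpow_le_rpow_of_nonpos hx.1 hx.2 (by linarith)) (by linarith)) hw hv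
  rw [Qrel]
  linarith

theorem stmt0 (γ vm : ℝ) (hγ : 1 < γ) (hvm : 0 < vm) :
    ∃ c₁ > (0 : ℝ), ∀ w : ℝ, 0 < w → w < vm → ∀ v : ℝ, 0 < v → v ≤ 3 * vm →
      c₁ * |v - w| ^ 2 ≤ Qrel γ v w := by
  refine ⟨γ * (3 * vm) ^ (-γ - 1) / 2, by positivity, ?_⟩
  intro w hw hwvm v hv hvM
  rw [sq_abs]
  exact half_mul_sq_le_Qrel hγ ⟨hv, hvM⟩ ⟨hw, by linarith⟩
end

section
/- Let γ>1, v₋>0, and δ*>0. There exists a constant C>0 (depending only on γ, v₋ and δ*) such that for all u,v,w>0 satisfying (0<w≤u≤v or 0<v≤u≤w) together with v₋ > w > v₋−δ*/2 and |w−u| > δ*, one has Q(v|w) − Q(u|w) ≥ C|u−v|. -/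
/-!
Since `∂/∂v Q(v|w) = p(w) - p(v)`, the difference `Q(v|w) - Q(u|w)` is the integral of
`p(w) - p(x)` over `x` between `u` and `v`. Since `u` lies between `w` and `v`, every such `x` is
at distance more than `δ*` from `w`, on the side of `v`; as `p` is decreasing, the mean value
theorem for `p` then gives the integrand the sign of `v - u` and modulus at least
`γ δ* (v₋ + δ*)^(-γ-1)`.
-/

open Real Set

theorem mul_sub_le_sub_of_hasDerivAt {f f' : ℝ → ℝ} {a b C : ℝ} (hab : a ≤ b)
    (hf : ∀ x ∈ Icc a b, HasDerivAt f (f' x) x) (hC : ∀ x ∈ Ioo a b, C ≤ f' x) :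
    C * (b - a) ≤ f b - f a := by
  have hf_cont : ContinuousOn f (Icc a b) := fun x hx =>
    (hf x hx).continuousAt.continuousWithinAt
  refine (convex_Icc a b).mul_sub_le_image_sub_of_le_deriv hf_cont ?_ ?_ a (left_mem_Icc.2 hab)
    b (right_mem_Icc.2 hab) hab <;> rw [interior_Icc]
  · exact fun x hx => (hf x (Ioo_subset_Icc_self hx)).differentiableAt.differentiableWithinAt
  · intro x hx
    rw [(hf x (Ioo_subset_Icc_self hx)).deriv]
    exact hC x hx

variable {γ : ℝ}

theorem pres_le_pres (hγ : 0 ≤ γ) {x y : ℝ} (hx : 0 < x) (hxy : x ≤ y) : pres γ y ≤ pres γ x :=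
  rpow_le_rpow_of_nonpos hx hxy (by linarith)

theorem mul_le_pres_sub_pres (hγ : 0 ≤ γ) {a b M : ℝ} (ha : 0 < a) (hab : a ≤ b) (hbM : b ≤ M) :
    γ * M ^ (-γ - 1) * (b - a) ≤ pres γ a - pres γ b := by
  have hderiv : ∀ x ∈ Icc a b, HasDerivAt (fun x => -pres γ x) (γ * x ^ (-γ - 1)) x :=
    fun x hx =>
      (hasDerivAt_rpow_const (Or.inl (ha.trans_le hx.1).ne')).fun_neg.congr_deriv (by ring)
  have hbound : ∀ x ∈ Ioo a b, γ * M ^ (-γ - 1) ≤ γ * x ^ (-γ - 1) := fun x hx =>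
    mul_le_mul_of_nonneg_left
      (rpow_le_rpow_of_nonpos (ha.trans hx.1) (hx.2.le.trans hbM) (by linarith)) hγ
  linarith [mul_sub_le_sub_of_hasDerivAt hab hderiv hbound]

theorem hasDerivAt_Qrel (hγ : γ ≠ 1) (w : ℝ) {v : ℝ} (hv : 0 < v) :
    HasDerivAt (fun v => Qrel γ v w) (pres γ w - pres γ v) v := by
  have hQ : HasDerivAt (Qf γ) ((1 - γ) * v ^ (1 - γ - 1) / (γ - 1)) v :=
    (hasDerivAt_rpow_const (Or.inl hv.ne')).div_const _
  have hQ' : (1 - γ) * v ^ (1 - γ - 1) / (γ - 1) = -pres γ v := by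
    rw [show 1 - γ - 1 = -γ by ring, pres]
    field_simp [sub_ne_zero.2 (Ne.symm hγ)]
    ring
  exact ((hQ.sub_const (Qf γ w)).add (((hasDerivAt_id' v).sub_const w).const_mul
    (pres γ w))).congr_deriv (by rw [hQ']; ring)

theorem mul_sub_le_Qrel_sub_Qrel_of_le (hγ : γ ≠ 1) {u v w C : ℝ} (hu : 0 < u) (huv : u ≤ v)
    (hC : ∀ x ∈ Ioo u v, C ≤ pres γ w - pres γ x) :
    C * (v - u) ≤ Qrel γ v w - Qrel γ u w :=
  mul_sub_le_sub_of_hasDerivAt huv (fun _ hx => hasDerivAt_Qrel hγ w (hu.trans_le hx.1)) hC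

theorem mul_sub_le_Qrel_sub_Qrel_of_ge (hγ : γ ≠ 1) {u v w C : ℝ} (hv : 0 < v) (hvu : v ≤ u)
    (hC : ∀ x ∈ Ioo v u, C ≤ pres γ x - pres γ w) :
    C * (u - v) ≤ Qrel γ v w - Qrel γ u w := by
  have hderiv : ∀ x ∈ Icc v u,
      HasDerivAt (fun x => -Qrel γ x w) (pres γ x - pres γ w) x := fun x hx =>
    (hasDerivAt_Qrel hγ w (hv.trans_le hx.1)).fun_neg.congr_deriv (by ring)
  linarith [mul_sub_le_sub_of_hasDerivAt hvu hderiv hC]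

theorem stmt3 (γ vm δs : ℝ) (hγ : 1 < γ) (hvm : 0 < vm) (hδs : 0 < δs) :
    ∃ C > (0 : ℝ), ∀ u v w : ℝ, 0 < u → 0 < v → 0 < w →
      ((w ≤ u ∧ u ≤ v) ∨ (v ≤ u ∧ u ≤ w)) →
      w < vm → vm - δs / 2 < w → δs < |w - u| →
      C * |u - v| ≤ Qrel γ v w - Qrel γ u w := by
  have hγ0 : 0 ≤ γ := by linarith
  refine ⟨γ * (vm + δs) ^ (-γ - 1) * δs, by positivity, ?_⟩
  intro u v w _ hv hw hcase hwvm _ hgap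
  rcases hcase with ⟨hwu, huv⟩ | ⟨hvu, huw⟩
  · rw [abs_sub_comm, abs_of_nonneg (by linarith)] at hgap
    rw [abs_sub_comm, abs_of_nonneg (by linarith)]
    refine mul_sub_le_Qrel_sub_Qrel_of_le hγ.ne' (by linarith) huv fun x hx => ?_
    calc γ * (vm + δs) ^ (-γ - 1) * δs
        = γ * (vm + δs) ^ (-γ - 1) * (w + δs - w) := by ring
      _ ≤ pres γ w - pres γ (w + δs) := mul_le_pres_sub_pres hγ0 hw (by linarith) (by linarith)
      _ ≤ pres γ w - pres γ x := by
        linarith [pres_le_pres hγ0 (by linarith : 0 < w + δs) (by linarith [hx.1] : w + δs ≤ x)]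
  · rw [abs_of_nonneg (by linarith)] at hgap
    rw [abs_of_nonneg (by linarith)]
    refine mul_sub_le_Qrel_sub_Qrel_of_ge hγ.ne' hv hvu fun x hx => ?_
    calc γ * (vm + δs) ^ (-γ - 1) * δs
        = γ * (vm + δs) ^ (-γ - 1) * (w - (w - δs)) := by ring
      _ ≤ pres γ (w - δs) - pres γ w :=
        mul_le_pres_sub_pres hγ0 (by linarith) (by linarith) (by linarith)
      _ ≤ pres γ x - pres γ w := by
        linarith [pres_le_pres hγ0 (hv.trans hx.1) (by linarith [hx.2] : x ≤ w - δs)]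
end

section
/- Let γ>1 and M>1. There exists a constant C>0 (depending only on γ and M) such that for every k ≥ 3M, every w with M⁻¹ < w < M, and every v>0, one has max{ (k⁻¹−v)₊ , (v−k)₊ } ≤ C·Q(v|w), where (y)₊ := max(y,0). -/
/-!
`Q(·|w)` is a Bregman divergence, so it satisfies the three-point identity
`Q(v|w) = Q(v|u) + Q(u|w) + (p(w) - p(u))(v - u)`. Dropping the two nonnegative terms, with
`u` the threshold `k` (resp. `k⁻¹`), bounds `(v - k)₊` (resp. `(k⁻¹ - v)₊`) by `Q(v|w)` divided by
`p(w) - p(k)` (resp. `p(k⁻¹) - p(w)`), and since `p` is decreasing these gaps are at least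
`p(M) - p(3M)` (resp. `p((3M)⁻¹) - p(M⁻¹)`) for `M⁻¹ < w < M ≤ k / 3`.
-/

namespace Real

theorem one_add_mul_sub_one_le_rpow_of_nonpos {θ t : ℝ} (hθ : θ ≤ 0) (ht : 0 < t) :
    1 + θ * (t - 1) ≤ t ^ θ := by
  rw [rpow_def_of_pos ht]
  nlinarith [add_one_le_exp (log t * θ), log_le_sub_one_of_pos ht]

theorem rpow_add_mul_rpow_sub_one_mul_le_rpow_of_nonpos {θ a b : ℝ} (hθ : θ ≤ 0) (ha : 0 < a)
    (hb : 0 < b) : b ^ θ + θ * b ^ (θ - 1) * (a - b) ≤ a ^ θ := by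
  have hab : a = b * (a / b) := by field_simp
  have hbθ : b ^ (θ - 1) * b = b ^ θ := by
    rw [← rpow_add_one hb.ne', sub_add_cancel]
  calc b ^ θ + θ * b ^ (θ - 1) * (a - b) = b ^ θ * (1 + θ * (a / b - 1)) := by
        rw [← hbθ]; field_simp
    _ ≤ b ^ θ * (a / b) ^ θ :=
        mul_le_mul_of_nonneg_left (one_add_mul_sub_one_le_rpow_of_nonpos hθ (by positivity))
          (by positivity)
    _ = a ^ θ := by rw [← mul_rpow hb.le (by positivity), ← hab]

end Real

theorem pres_le_pres_s5 {γ a b : ℝ} (hγ : 0 ≤ γ) (ha : 0 < a) (hab : a ≤ b) :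
    pres γ b ≤ pres γ a :=
  Real.rpow_le_rpow_of_nonpos ha hab (neg_nonpos.2 hγ)

theorem pres_lt_pres {γ a b : ℝ} (hγ : 0 < γ) (ha : 0 < a) (hab : a < b) :
    pres γ b < pres γ a :=
  Real.rpow_lt_rpow_of_neg ha hab (neg_neg_of_pos hγ)

theorem Qrel_nonneg {γ v w : ℝ} (hγ : 1 < γ) (hv : 0 < v) (hw : 0 < w) :
    0 ≤ Qrel γ v w := by
  have htangent := Real.rpow_add_mul_rpow_sub_one_mul_le_rpow_of_nonpos
    (θ := 1 - γ) (by linarith) hv hw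
  rw [show 1 - γ - 1 = -γ by ring] at htangent
  have hQ : Qrel γ v w =
      (v ^ (1 - γ) - (w ^ (1 - γ) + (1 - γ) * w ^ (-γ) * (v - w))) / (γ - 1) := by
    unfold Qrel Qf pres
    field_simp [(sub_pos.2 hγ).ne']
    ring
  rw [hQ]
  exact div_nonneg (sub_nonneg.2 htangent) (sub_pos.2 hγ).le

theorem Qrel_three_point (γ v u w : ℝ) :
    Qrel γ v w = Qrel γ v u + Qrel γ u w + (pres γ w - pres γ u) * (v - u) := by
  unfold Qrel Qf
  ring

theorem pres_sub_mul_le_Qrel {γ v u w : ℝ} (hγ : 1 < γ) (hv : 0 < v) (hu : 0 < u)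
    (hw : 0 < w) :
    (pres γ w - pres γ u) * (v - u) ≤ Qrel γ v w := by
  rw [Qrel_three_point γ v u w]
  linarith [Qrel_nonneg hγ hv hu, Qrel_nonneg hγ hu hw]

section Thresholds

variable {γ a b u v w : ℝ}

theorem max_sub_zero_le_inv_mul_Qrel_of_ge (hγ : 1 < γ) (hv : 0 < v) (hw : 0 < w) (hwa : w ≤ a)
    (hab : a < b) (hbu : b ≤ u) :
    max (v - u) 0 ≤ (pres γ a - pres γ b)⁻¹ * Qrel γ v w := by
  have hu : 0 < u := by linarith
  have hgap : 0 < pres γ a - pres γ b := sub_pos.2 (pres_lt_pres (by linarith) (by linarith) hab)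
  have hQ := Qrel_nonneg hγ hv hw
  refine max_le ?_ (by positivity)
  rw [le_inv_mul_iff₀ hgap]
  rcases le_total v u with hvu | huv
  · exact (mul_nonpos_of_nonneg_of_nonpos hgap.le (sub_nonpos.2 hvu)).trans hQ
  calc (pres γ a - pres γ b) * (v - u) ≤ (pres γ w - pres γ u) * (v - u) :=
        mul_le_mul_of_nonneg_right (sub_le_sub (pres_le_pres_s5 (by linarith) hw hwa)
          (pres_le_pres_s5 (by linarith) (by linarith) hbu)) (sub_nonneg.2 huv)
    _ ≤ Qrel γ v w := pres_sub_mul_le_Qrel hγ hv hu hw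

theorem max_sub_zero_le_inv_mul_Qrel_of_le (hγ : 1 < γ) (hv : 0 < v) (hu : 0 < u) (hua : u ≤ a)
    (hab : a < b) (hbw : b ≤ w) :
    max (u - v) 0 ≤ (pres γ a - pres γ b)⁻¹ * Qrel γ v w := by
  have hw : 0 < w := by linarith
  have hgap : 0 < pres γ a - pres γ b := sub_pos.2 (pres_lt_pres (by linarith) (by linarith) hab)
  have hQ := Qrel_nonneg hγ hv hw
  refine max_le ?_ (by positivity)
  rw [le_inv_mul_iff₀ hgap]
  rcases le_total u v with huv | hvu
  · exact (mul_nonpos_of_nonneg_of_nonpos hgap.le (sub_nonpos.2 huv)).trans hQ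
  calc (pres γ a - pres γ b) * (u - v) ≤ (pres γ u - pres γ w) * (u - v) :=
        mul_le_mul_of_nonneg_right (sub_le_sub (pres_le_pres_s5 (by linarith) hu hua)
          (pres_le_pres_s5 (by linarith) (by linarith) hbw)) (sub_nonneg.2 hvu)
    _ = (pres γ w - pres γ u) * (v - u) := by ring
    _ ≤ Qrel γ v w := pres_sub_mul_le_Qrel hγ hv hu hw

end Thresholds

theorem stmt5 (γ M : ℝ) (hγ : 1 < γ) (hM : 1 < M) :
    ∃ C > (0 : ℝ), ∀ k : ℝ, 3 * M ≤ k → ∀ w : ℝ, M⁻¹ < w → w < M → ∀ v : ℝ, 0 < v →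
      max (max (k⁻¹ - v) 0) (max (v - k) 0) ≤ C * Qrel γ v w := by
  have hM₀ : 0 < M := by linarith
  have hM₃ : M < 3 * M := by linarith
  have hM₃inv : (3 * M)⁻¹ < M⁻¹ := inv_strictAnti₀ hM₀ hM₃
  set C₁ := (pres γ (3 * M)⁻¹ - pres γ M⁻¹)⁻¹
  set C₂ := (pres γ M - pres γ (3 * M))⁻¹
  have hC₁ : 0 < C₁ :=
    inv_pos.2 (sub_pos.2 (pres_lt_pres (by linarith) (by positivity) hM₃inv))
  refine ⟨max C₁ C₂, lt_max_of_lt_left hC₁, fun k hk w hw₁ hw₂ v hv => ?_⟩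
  have hw : 0 < w := (inv_pos.2 hM₀).trans hw₁
  have hQ := Qrel_nonneg hγ hv hw
  refine max_le ?_ ?_
  · calc max (k⁻¹ - v) 0 ≤ C₁ * Qrel γ v w :=
          max_sub_zero_le_inv_mul_Qrel_of_le hγ hv (inv_pos.2 (by linarith))
            (inv_anti₀ (by positivity) hk) hM₃inv hw₁.le
      _ ≤ max C₁ C₂ * Qrel γ v w := mul_le_mul_of_nonneg_right (le_max_left _ _) hQ
  · calc max (v - k) 0 ≤ C₂ * Qrel γ v w :=
          max_sub_zero_le_inv_mul_Qrel_of_ge hγ hv hw hw₂.le hM₃ hk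
      _ ≤ max C₁ C₂ * Qrel γ v w := mul_le_mul_of_nonneg_right (le_max_right _ _) hQ
end

section
/- Let γ>1 and M>1. There exist constants C>0 and k₀>1 (depending only on γ and M) such that for all w₁,w₂ with M⁻¹ < w₁,w₂ < M and every v with 0 < v < k₀⁻¹ or v > k₀, one has Q(v|w₁) ≤ C·Q(v|w₂). -/
/-!
For `M⁻¹ < w < M` the relative functional `Q(v|w) = Q(v) + w^(-γ) v - γ/(γ-1) w^(1-γ)` lies
between `S(v) - B` and `Q(v) + M^γ v ≤ M^(2γ) S(v)`, where `S(v) = Q(v) + M^(-γ) v` and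
`B = γ/(γ-1) M^(γ-1)`. Since `S` blows up both as `v → 0⁺` and as `v → ∞`, outside a compact
range of `v` we have `S ≥ 2B`, hence `S - B ≥ S/2` and `Q(v|w₁) ≤ 2 M^(2γ) Q(v|w₂)`.
-/

open Filter Topology

lemma exists_gt_one_forall_of_eventually_nhdsGT_zero_of_eventually_atTop {p : ℝ → Prop}
    (h₀ : ∀ᶠ v in 𝓝[>] 0, p v) (h_top : ∀ᶠ v in atTop, p v) :
    ∃ k₀ > (1 : ℝ), ∀ v, ((0 < v ∧ v < k₀⁻¹) ∨ k₀ < v) → p v := by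
  obtain ⟨u, hu : 0 < u, hsmall⟩ := mem_nhdsGT_iff_exists_Ioo_subset.mp h₀
  obtain ⟨a, hlarge⟩ := eventually_atTop.mp h_top
  refine ⟨max (max 2 a) u⁻¹, by simp, ?_⟩
  rintro v (⟨hv, hvk⟩ | hvk)
  · refine hsmall ⟨hv, hvk.trans_le ?_⟩
    simpa using inv_anti₀ (inv_pos.mpr hu) (le_max_right (max 2 a) u⁻¹)
  · exact hlarge v ((le_max_right 2 a).trans (le_max_left _ _) |>.trans hvk.le)

lemma Qf_nonneg {γ v : ℝ} (hγ : 1 < γ) (hv : 0 ≤ v) : 0 ≤ Qf γ v :=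
  div_nonneg (Real.rpow_nonneg hv _) (by linarith)

section Limits

variable {γ c : ℝ}

lemma tendsto_Qf_nhdsGT_zero (hγ : 1 < γ) : Tendsto (Qf γ) (𝓝[>] 0) atTop :=
  (tendsto_rpow_neg_nhdsGT_zero (by linarith)).atTop_div_const (by linarith)

lemma tendsto_Qf_add_mul_nhdsGT_zero (hγ : 1 < γ) (hc : 0 ≤ c) :
    Tendsto (fun v ↦ Qf γ v + c * v) (𝓝[>] 0) atTop :=
  (tendsto_Qf_nhdsGT_zero hγ).atTop_add_zero_eventuallyLE <| by
    filter_upwards [self_mem_nhdsWithin] with v hv using mul_nonneg hc (le_of_lt hv)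

lemma tendsto_Qf_add_mul_atTop (hγ : 1 < γ) (hc : 0 < c) :
    Tendsto (fun v ↦ Qf γ v + c * v) atTop atTop :=
  Tendsto.zero_eventuallyLE_add_atTop
    (by filter_upwards [eventually_ge_atTop 0] with v hv using Qf_nonneg hγ hv)
    (tendsto_id.const_mul_atTop hc)

end Limits

lemma Qrel_eq {γ w : ℝ} (hγ : 1 < γ) (hw : 0 < w) (v : ℝ) :
    Qrel γ v w = Qf γ v + w ^ (-γ) * v - γ / (γ - 1) * w ^ (1 - γ) := by
  have hpow : w ^ (-γ) * w = w ^ (1 - γ) := by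
    rw [← Real.rpow_add_one hw.ne']; ring_nf
  have : γ - 1 ≠ 0 := by linarith
  unfold Qrel Qf pres
  rw [mul_sub, hpow]
  field_simp
  ring

lemma Real.rpow_neg_le_of_inv_le {M w t : ℝ} (hM : 0 < M) (hw : M⁻¹ ≤ w) (ht : 0 ≤ t) :
    w ^ (-t) ≤ M ^ t := by
  have hw₀ : 0 < w := (inv_pos.mpr hM).trans_le hw
  rw [Real.rpow_neg hw₀.le, ← Real.inv_rpow hw₀.le]
  exact Real.rpow_le_rpow (by positivity) (inv_le_of_inv_le₀ hM hw) ht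

lemma Real.inv_rpow_le_rpow_neg {M w t : ℝ} (hw₀ : 0 < w) (hw : w ≤ M) (ht : 0 ≤ t) :
    (M ^ t)⁻¹ ≤ w ^ (-t) := by
  rw [Real.rpow_neg hw₀.le]
  exact inv_anti₀ (by positivity) (Real.rpow_le_rpow hw₀.le hw ht)

section Bounds

variable {γ M v w : ℝ}

lemma Qrel_le (hγ : 1 < γ) (hM : 0 < M) (hw : M⁻¹ < w) (hv : 0 ≤ v) :
    Qrel γ v w ≤ Qf γ v + M ^ γ * v := by
  have hw₀ : 0 < w := (inv_pos.mpr hM).trans hw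
  have hp := Real.rpow_neg_le_of_inv_le hM hw.le (by linarith : (0:ℝ) ≤ γ)
  have : 0 ≤ γ / (γ - 1) * w ^ (1 - γ) :=
    mul_nonneg (div_nonneg (by linarith) (by linarith)) (Real.rpow_nonneg hw₀.le _)
  rw [Qrel_eq hγ hw₀]
  nlinarith

lemma le_Qrel (hγ : 1 < γ) (hM : 0 < M) (hwl : M⁻¹ < w) (hwr : w < M) (hv : 0 ≤ v) :
    Qf γ v + (M ^ γ)⁻¹ * v - γ / (γ - 1) * M ^ (γ - 1) ≤ Qrel γ v w := by
  have hw₀ : 0 < w := (inv_pos.mpr hM).trans hwl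
  have hp := Real.inv_rpow_le_rpow_neg hw₀ hwr.le (by linarith : (0:ℝ) ≤ γ)
  have hq := Real.rpow_neg_le_of_inv_le hM hwl.le (by linarith : (0:ℝ) ≤ γ - 1)
  rw [neg_sub] at hq
  have : 0 ≤ γ / (γ - 1) := div_nonneg (by linarith) (by linarith)
  rw [Qrel_eq hγ hw₀]
  nlinarith

end Bounds

theorem stmt6 (γ M : ℝ) (hγ : 1 < γ) (hM : 1 < M) :
    ∃ C > (0 : ℝ), ∃ k₀ > (1 : ℝ), ∀ w₁ w₂ : ℝ, M⁻¹ < w₁ → w₁ < M → M⁻¹ < w₂ → w₂ < M →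
      ∀ v : ℝ, ((0 < v ∧ v < k₀⁻¹) ∨ k₀ < v) →
      Qrel γ v w₁ ≤ C * Qrel γ v w₂ := by
  set A := M ^ γ
  set B := γ / (γ - 1) * M ^ (γ - 1)
  have hA : 1 ≤ A := Real.one_le_rpow hM.le (by linarith)
  have hM₀ : 0 < M := by linarith
  have hA₀ : 0 < A⁻¹ := by positivity
  obtain ⟨k₀, hk₀, hk⟩ := exists_gt_one_forall_of_eventually_nhdsGT_zero_of_eventually_atTop
    ((tendsto_Qf_add_mul_nhdsGT_zero hγ hA₀.le).eventually_ge_atTop (2 * B))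
    ((tendsto_Qf_add_mul_atTop hγ hA₀).eventually_ge_atTop (2 * B))
  refine ⟨2 * A ^ 2, by positivity, k₀, hk₀, fun w₁ w₂ hw₁ _ hw₂l hw₂r v hv ↦ ?_⟩
  have hv₀ : 0 ≤ v := by rcases hv with ⟨hv, -⟩ | hv <;> linarith
  have hS : 2 * B ≤ Qf γ v + A⁻¹ * v := hk v hv
  have h₂ := le_Qrel hγ hM₀ hw₂l hw₂r hv₀
  calc Qrel γ v w₁ ≤ Qf γ v + A * v := Qrel_le hγ hM₀ hw₁ hv₀
    _ ≤ A ^ 2 * (Qf γ v + A⁻¹ * v) := by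
      have hA₂ : A ^ 2 * A⁻¹ = A := by field_simp
      rw [mul_add, ← mul_assoc, hA₂]
      gcongr
      exact le_mul_of_one_le_left (Qf_nonneg hγ hv₀) (one_le_pow₀ hA)
    _ ≤ A ^ 2 * (2 * Qrel γ v w₂) := by gcongr; linarith
    _ = 2 * A ^ 2 * Qrel γ v w₂ := by ring
end

section
/- Let γ>1 and v₋>0. There exist positive constants C and δ* (depending only on γ and v₋) such that for any 0<δ<δ* and any v,w>0 satisfying |p(v)−p(w)|<δ and |p(w)−p(v₋)|<δ, one has p(v|w) ≤ ( (γ+1)/(2γ) · 1/p(w) + Cδ ) · |p(v)−p(w)|². -/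
/-- Relative pressure `p(v|w) = p(v) - p(w) - p'(w)(v-w)`, where `p'(w) = -γ w^(-γ-1)`. -/
noncomputable def prel (γ v w : ℝ) : ℝ := pres γ v - pres γ w + γ * w ^ (-γ - 1) * (v - w)

open Set

theorem ConvexOn.deriv_mul_sub_le_sub {S : Set ℝ} {f : ℝ → ℝ} {f' x y : ℝ}
    (hf : ConvexOn ℝ S f) (hx : x ∈ S) (hy : y ∈ S) (hf' : HasDerivAt f f' x) :
    f' * (y - x) ≤ f y - f x := by
  rcases lt_trichotomy x y with hxy | rfl | hyx
  · have := hf.le_slope_of_hasDerivAt hx hy hxy hf'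
    rwa [slope_def_field, le_div_iff₀ (sub_pos.2 hxy)] at this
  · simp
  · have := hf.slope_le_of_hasDerivAt hy hx hyx hf'
    rw [slope_def_field, div_le_iff₀ (sub_pos.2 hyx)] at this
    linarith

theorem Convex.sub_sub_deriv_mul_sub_le_of_deriv2_le {S : Set ℝ} (hS : Convex ℝ S)
    {f f' f'' : ℝ → ℝ} {M x y : ℝ} (hf : ∀ t ∈ S, HasDerivAt f (f' t) t)
    (hf' : ∀ t ∈ S, HasDerivAt f' (f'' t) t) (hM : ∀ t ∈ S, f'' t ≤ M) (hx : x ∈ S)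
    (hy : y ∈ S) :
    f y - f x - f' x * (y - x) ≤ M / 2 * (y - x) ^ 2 := by
  have hsq (t : ℝ) : HasDerivAt (fun t => M / 2 * (t - x) ^ 2) (M * (t - x)) t := by
    refine ((((hasDerivAt_id t).sub_const x).fun_pow 2).const_mul (M / 2)).congr_deriv ?_
    simp only [id, Nat.cast_ofNat]; ring
  have hlin (t : ℝ) : HasDerivAt (fun t => M * (t - x)) M t := by
    simpa using ((hasDerivAt_id t).sub_const x).const_mul M
  have hconv : ConvexOn ℝ S fun t => M / 2 * (t - x) ^ 2 - f t :=
    convexOn_of_hasDerivWithinAt2_nonneg hS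
      (fun t ht => ((hsq t).sub (hf t ht)).continuousAt.continuousWithinAt)
      (fun t ht => ((hsq t).sub (hf t (interior_subset ht))).hasDerivWithinAt)
      (fun t ht => ((hlin t).sub (hf' t (interior_subset ht))).hasDerivWithinAt)
      (fun t ht => sub_nonneg.2 (hM t (interior_subset ht)))
  have := hconv.deriv_mul_sub_le_sub hx hy ((hsq x).sub (hf x hx))
  simp only [sub_self] at this
  linarith

theorem rpow_neg_le_rpow_neg_add {m x y δ s : ℝ} (hs : 0 ≤ s) (hm : 0 < m) (hmx : m ≤ x)
    (hy : 0 < y) (hδ : 0 ≤ δ) (hyx : y - δ ≤ x) :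
    x ^ (-s) ≤ y ^ (-s) + s * m ^ (-s - 1) * δ := by
  have hC : 0 ≤ s * m ^ (-s - 1) * δ := by positivity
  rcases le_total y x with hyx' | hxy
  · linarith [Real.rpow_le_rpow_of_nonpos hy hyx' (neg_nonpos.2 hs)]
  · have hderiv (t : ℝ) (ht : t ∈ interior (Ici m)) :
        HasDerivAt (fun t => -t ^ (-s)) (s * t ^ (-s - 1)) t := by
      rw [interior_Ici] at ht
      exact (Real.hasDerivAt_rpow_const (Or.inl (hm.trans ht).ne')).fun_neg.congr_deriv (by ring)
    have := (convex_Ici m).image_sub_le_mul_sub_of_deriv_le (f := fun t => -t ^ (-s))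
      (fun t ht => (Real.continuousAt_rpow_const t (-s)
        (Or.inl (hm.trans_le ht).ne')).neg.continuousWithinAt)
      (fun t ht => (hderiv t ht).differentiableAt.differentiableWithinAt)
      (fun t ht => by
        rw [(hderiv t ht).deriv]
        rw [interior_Ici] at ht
        exact mul_le_mul_of_nonneg_left
          (Real.rpow_le_rpow_of_nonpos hm ht.le (by linarith)) hs)
      x hmx y (hmx.trans hxy) hxy
    have hmul : s * m ^ (-s - 1) * (y - x) ≤ s * m ^ (-s - 1) * δ :=
      mul_le_mul_of_nonneg_left (by linarith) (by positivity)
    linarith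

theorem pres_rpow {γ w : ℝ} (hw : 0 < w) (r : ℝ) : pres γ w ^ r = w ^ (-γ * r) :=
  (Real.rpow_mul hw.le _ _).symm

theorem prel_eq_mul_rpow_remainder {γ v w : ℝ} (hγ : γ ≠ 0) (hv : 0 < v) (hw : 0 < w) :
    prel γ v w = γ * pres γ w ^ (1 + 1 / γ) *
      (pres γ v ^ (-(1 / γ)) - pres γ w ^ (-(1 / γ))
        - -(1 / γ) * pres γ w ^ (-(1 / γ) - 1) * (pres γ v - pres γ w)) := by
  have hw1 : w ^ (-γ - 1) * w ^ (γ + 1) = 1 := by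
    rw [← Real.rpow_add hw, sub_add_add_cancel, neg_add_cancel, Real.rpow_zero]
  rw [prel, pres_rpow hv, pres_rpow hw, pres_rpow hw, pres_rpow hw,
    show -γ * -(1 / γ) = 1 by field_simp, show -γ * (1 + 1 / γ) = -γ - 1 by field_simp; ring,
    show -γ * (-(1 / γ) - 1) = γ + 1 by field_simp; ring, Real.rpow_one, Real.rpow_one]
  field_simp
  linear_combination (pres γ w - pres γ v) * hw1

theorem prel_le_of_pres_near {γ v w m δ : ℝ} (hγ : 0 < γ) (hv : 0 < v) (hw : 0 < w)
    (hm : 0 < m) (hδ : 0 ≤ δ) (hmw : m ≤ pres γ w - δ) (hvw : pres γ w - δ ≤ pres γ v) :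
    prel γ v w ≤ ((γ + 1) / (2 * γ) * (1 / pres γ w) + (γ + 1) / (2 * γ) *
      pres γ w ^ (1 + 1 / γ) * (1 / γ + 2) * m ^ (-(1 / γ + 2) - 1) * δ) *
        (pres γ v - pres γ w) ^ 2 := by
  rw [prel_eq_mul_rpow_remainder hγ.ne' hv hw]
  set P := pres γ v
  set Q := pres γ w
  set s := 1 / γ + 2
  have hQ : 0 < Q := by linarith
  have hpos : ∀ t ∈ Ici (Q - δ), 0 < t := fun t ht => hm.trans_le (hmw.trans ht)
  have hd2 : ∀ t ∈ Ici (Q - δ), -(1 / γ) * ((-(1 / γ) - 1) * t ^ (-(1 / γ) - 1 - 1)) ≤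
      1 / γ * (1 / γ + 1) * (Q ^ (-s) + s * m ^ (-s - 1) * δ) := by
    intro t ht
    rw [show -(1 / γ) - 1 - 1 = -s by ring, show -(1 / γ) * ((-(1 / γ) - 1) * t ^ (-s)) =
      1 / γ * (1 / γ + 1) * t ^ (-s) by ring]
    gcongr
    exact rpow_neg_le_rpow_neg_add (by positivity) hm (hmw.trans ht) hQ hδ ht
  have htaylor := (convex_Ici (Q - δ)).sub_sub_deriv_mul_sub_le_of_deriv2_le
    (f := fun t => t ^ (-(1 / γ))) (f' := fun t => -(1 / γ) * t ^ (-(1 / γ) - 1))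
    (fun t ht => Real.hasDerivAt_rpow_const (Or.inl (hpos t ht).ne'))
    (fun t ht => (Real.hasDerivAt_rpow_const (Or.inl (hpos t ht).ne')).const_mul _)
    hd2 (mem_Ici.2 (sub_le_self Q hδ)) hvw
  have hQs : Q ^ (1 + 1 / γ) * Q ^ (-s) = 1 / Q := by
    rw [← Real.rpow_add hQ, show 1 + 1 / γ + -s = -1 by ring, Real.rpow_neg_one, one_div]
  calc _ ≤ γ * Q ^ (1 + 1 / γ) * (1 / γ * (1 / γ + 1) * (Q ^ (-s) + s * m ^ (-s - 1) * δ) / 2 *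
        (P - Q) ^ 2) := mul_le_mul_of_nonneg_left htaylor (by positivity)
    _ = _ := by
      rw [← hQs]
      linear_combination 1 / γ / 2 * Q ^ (1 + 1 / γ) * (Q ^ (-s) + s * m ^ (-s - 1) * δ) *
        (P - Q) ^ 2 * mul_one_div_cancel hγ.ne'

theorem stmt7 (γ vm : ℝ) (hγ : 1 < γ) (hvm : 0 < vm) :
    ∃ C > (0 : ℝ), ∃ δs > (0 : ℝ), ∀ δ : ℝ, 0 < δ → δ < δs → ∀ v w : ℝ, 0 < v → 0 < w →
      |pres γ v - pres γ w| < δ → |pres γ w - pres γ vm| < δ →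
      prel γ v w ≤ ((γ + 1) / (2 * γ) * (1 / pres γ w) + C * δ) * |pres γ v - pres γ w| ^ 2 := by
  have hγ₀ : 0 < γ := by linarith
  set p₀ := pres γ vm
  have hp₀ : 0 < p₀ := Real.rpow_pos_of_pos hvm _
  refine ⟨(γ + 1) / (2 * γ) * (2 * p₀) ^ (1 + 1 / γ) * (1 / γ + 2) *
    (p₀ / 2) ^ (-(1 / γ + 2) - 1), by positivity, p₀ / 4, by positivity,
    fun δ hδ hδs v w hv hw hvw hwp₀ => ?_⟩
  rw [abs_lt] at hvw hwp₀
  rw [sq_abs]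
  refine (prel_le_of_pres_near hγ₀ hv hw (half_pos hp₀) hδ.le (by linarith)
    (by linarith)).trans ?_
  have hw₀ : 0 ≤ pres γ w := by linarith
  have hw₁ : pres γ w ≤ 2 * p₀ := by linarith
  gcongr
end

section
/- (Effective-velocity transformation of the Navier–Stokes system.) Let γ>1, α>0, b>0 and T>0; set p(v)=v^(−γ), μ(v)=b·v^(−α), and β:=γ−α. Suppose v:(0,T)×ℝ→(0,∞) and u:(0,T)×ℝ→ℝ are smooth (three times continuously differentiable) and satisfy, on (0,T)×ℝ, ∂ₜv − ∂ₓu = 0 and ∂ₜu + ∂ₓ(p(v)) = ∂ₓ( (μ(v)/v)·∂ₓu ). Define the effective velocity h := u + (b/α)·∂ₓ( v^(−α) ). Then on (0,T)×ℝ: ∂ₜv − ∂ₓh = −(b/γ)·∂ₓ( v^β·∂ₓ(p(v)) ) and ∂ₜh + ∂ₓ(p(v)) = 0. -/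
open Function

section PartialDerivatives

variable {E : Type*} [NormedAddCommGroup E] [NormedSpace ℝ E] {t x : ℝ}

theorem HasFDerivAt.hasDerivAt_partial_fst {F : ℝ × ℝ → E} {F' : ℝ × ℝ →L[ℝ] E}
    (hF : HasFDerivAt F F' (t, x)) : HasDerivAt (fun s => F (s, x)) (F' (1, 0)) t :=
  hF.comp_hasDerivAt t ((hasDerivAt_id t).prodMk (hasDerivAt_const t x))

theorem HasFDerivAt.hasDerivAt_partial_snd {F : ℝ × ℝ → E} {F' : ℝ × ℝ →L[ℝ] E}
    (hF : HasFDerivAt F F' (t, x)) : HasDerivAt (fun y => F (t, y)) (F' (0, 1)) x :=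
  hF.comp_hasDerivAt x ((hasDerivAt_const x t).prodMk (hasDerivAt_id x))

variable {f : ℝ → ℝ → E}

theorem DifferentiableAt.differentiableAt_curry_fst (hf : DifferentiableAt ℝ (uncurry f) (t, x)) :
    DifferentiableAt ℝ (fun s => f s x) t :=
  hf.hasFDerivAt.hasDerivAt_partial_fst.differentiableAt

theorem DifferentiableAt.differentiableAt_curry_snd (hf : DifferentiableAt ℝ (uncurry f) (t, x)) :
    DifferentiableAt ℝ (fun y => f t y) x :=
  hf.hasFDerivAt.hasDerivAt_partial_snd.differentiableAt

theorem contDiff_uncurry_deriv_snd {n : WithTop ℕ∞} (hf : ContDiff ℝ (n + 1) (uncurry f)) :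
    ContDiff ℝ n (uncurry fun s y => deriv (fun z => f s z) y) := by
  have hd : Differentiable ℝ (uncurry f) := hf.differentiable (by simp)
  have hpartial : (uncurry fun s y => deriv (fun z => f s z) y) =
      fun p => fderiv ℝ (uncurry f) p (0, 1) := by
    funext ⟨s, y⟩
    exact (hd (s, y)).hasFDerivAt.hasDerivAt_partial_snd.deriv
  rw [hpartial]
  exact (hf.fderiv_right le_rfl).clm_apply contDiff_const

theorem deriv_deriv_comm (hf : ContDiff ℝ 2 (uncurry f)) (t x : ℝ) :
    deriv (fun s => deriv (fun y => f s y) x) t = deriv (fun y => deriv (fun s => f s y) t) x := by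
  set F := uncurry f
  have hd : Differentiable ℝ F := hf.differentiable two_ne_zero
  have hd2 : Differentiable ℝ (fderiv ℝ F) :=
    (hf.fderiv_right (m := 1) le_rfl).differentiable one_ne_zero
  have hF'' (e : ℝ × ℝ) :
      HasFDerivAt (fun p => fderiv ℝ F p e) ((fderiv ℝ (fderiv ℝ F) (t, x)).flip e) (t, x) := by
    simpa using (hd2 (t, x)).hasFDerivAt.clm_apply (hasFDerivAt_const e (t, x))
  have hx : (fun s => deriv (fun y => f s y) x) = fun s => fderiv ℝ F (s, x) (0, 1) :=
    funext fun s => (hd (s, x)).hasFDerivAt.hasDerivAt_partial_snd.deriv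
  have ht : (fun y => deriv (fun s => f s y) t) = fun y => fderiv ℝ F (t, y) (1, 0) :=
    funext fun y => (hd (t, y)).hasFDerivAt.hasDerivAt_partial_fst.deriv
  rw [hx, ht, (hF'' (0, 1)).hasDerivAt_partial_fst.deriv, (hF'' (1, 0)).hasDerivAt_partial_snd.deriv]
  exact second_derivative_symmetric (fun p => (hd p).hasFDerivAt) (hd2 (t, x)).hasFDerivAt _ _

end PartialDerivatives

theorem rpow_mul_deriv_pres (γ : ℝ) {α x : ℝ} {g : ℝ → ℝ} (hα : α ≠ 0)
    (hg : DifferentiableAt ℝ g x) (hpos : 0 < g x) :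
    g x ^ (γ - α) * deriv (fun y => pres γ (g y)) x = γ / α * deriv (fun y => g y ^ (-α)) x := by
  have hexp : g x ^ (γ - α) * g x ^ (-γ - 1) = g x ^ (-α - 1) := by
    rw [← Real.rpow_add hpos]; ring_nf
  simp only [pres]
  rw [deriv_rpow_const hg (Or.inl hpos.ne'), deriv_rpow_const hg (Or.inl hpos.ne'), ← hexp]
  field_simp

theorem div_mul_deriv_rpow_neg (b : ℝ) {α t : ℝ} {g : ℝ → ℝ} (hα : α ≠ 0)
    (hg : DifferentiableAt ℝ g t) (hpos : 0 < g t) :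
    b / α * deriv (fun s => g s ^ (-α)) t = -(b * g t ^ (-α) / g t * deriv g t) := by
  rw [deriv_rpow_const hg (Or.inl hpos.ne'), Real.rpow_sub hpos, Real.rpow_one]
  field_simp

theorem stmt14_general (γ α b T : ℝ) (hγ : 1 < γ) (hα : 0 < α)
    (v u : ℝ → ℝ → ℝ)
    (hv : ContDiff ℝ 3 (Function.uncurry v)) (hu : ContDiff ℝ 3 (Function.uncurry u))
    (hvpos : ∀ t x, 0 < v t x)
    (heq1 : ∀ t ∈ Set.Ioo (0 : ℝ) T, ∀ x : ℝ,
      deriv (fun s => v s x) t - deriv (fun y => u t y) x = 0)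
    (heq2 : ∀ t ∈ Set.Ioo (0 : ℝ) T, ∀ x : ℝ,
      deriv (fun s => u s x) t + deriv (fun y => pres γ (v t y)) x =
        deriv (fun y => (b * (v t y) ^ (-α) / v t y) * deriv (fun z => u t z) y) x)
    (h : ℝ → ℝ → ℝ)
    (hdef : ∀ t x, h t x = u t x + (b / α) * deriv (fun y => (v t y) ^ (-α)) x) :
    (∀ t ∈ Set.Ioo (0 : ℝ) T, ∀ x : ℝ,
      deriv (fun s => v s x) t - deriv (fun y => h t y) x =
        -(b / γ) * deriv (fun y => (v t y) ^ (γ - α)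
            * deriv (fun z => pres γ (v t z)) y) x) ∧
    (∀ t ∈ Set.Ioo (0 : ℝ) T, ∀ x : ℝ,
      deriv (fun s => h s x) t + deriv (fun y => pres γ (v t y)) x = 0) := by
  have hγ0 : γ ≠ 0 := (zero_lt_one.trans hγ).ne'
  have hw : ContDiff ℝ 2 (uncurry fun t x => v t x ^ (-α)) :=
    (hv.of_le (by norm_num)).rpow_const_of_ne fun p => (hvpos p.1 p.2).ne'
  have hv' := hv.differentiable (by norm_num)
  have hu' := hu.differentiable (by norm_num)
  have hw' := (contDiff_uncurry_deriv_snd (n := 1) hw).differentiable one_ne_zero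
  simp only [hdef]
  refine ⟨fun t ht x => ?_, fun t ht x => ?_⟩
  · have hpres : (fun y => v t y ^ (γ - α) * deriv (fun z => pres γ (v t z)) y) =
        fun y => γ / α * deriv (fun z => v t z ^ (-α)) y :=
      funext fun y => rpow_mul_deriv_pres γ hα.ne' (hv' _).differentiableAt_curry_snd (hvpos t y)
    rw [deriv_fun_add (hu' _).differentiableAt_curry_snd
      ((hw' _).differentiableAt_curry_snd.const_mul _),
      deriv_const_mul_field, hpres, deriv_const_mul_field]
    field_simp
    linear_combination α * heq1 t ht x
  · have hwt : (fun y => b / α * deriv (fun s => v s y ^ (-α)) t) =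
        fun y => -(b * v t y ^ (-α) / v t y * deriv (fun z => u t z) y) :=
      funext fun y => by
        rw [div_mul_deriv_rpow_neg b hα.ne' (hv' _).differentiableAt_curry_fst (hvpos t y),
          sub_eq_zero.mp (heq1 t ht y)]
    rw [deriv_fun_add (hu' _).differentiableAt_curry_fst
      ((hw' _).differentiableAt_curry_fst.const_mul _),
      deriv_const_mul_field, deriv_deriv_comm hw, ← deriv_const_mul_field, hwt, deriv.fun_neg]
    linarith [heq2 t ht x]

/-- Effective-velocity (Bresch-Desjardins) transformation of the Navier-Stokes system:
with `h := u + (b/α)·∂ₓ(v^(-α))`, the system `vₜ - uₓ = 0`,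
`uₜ + p(v)ₓ = ((μ(v)/v)uₓ)ₓ` becomes `vₜ - hₓ = -(b/γ)(v^β p(v)ₓ)ₓ`, `hₜ + p(v)ₓ = 0`. -/
theorem stmt14 (γ α b T : ℝ) (hγ : 1 < γ) (hα : 0 < α) (hb : 0 < b) (hT : 0 < T)
    (v u : ℝ → ℝ → ℝ)
    (hv : ContDiff ℝ 3 (Function.uncurry v)) (hu : ContDiff ℝ 3 (Function.uncurry u))
    (hvpos : ∀ t x, 0 < v t x)
    (heq1 : ∀ t ∈ Set.Ioo (0 : ℝ) T, ∀ x : ℝ,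
      deriv (fun s => v s x) t - deriv (fun y => u t y) x = 0)
    (heq2 : ∀ t ∈ Set.Ioo (0 : ℝ) T, ∀ x : ℝ,
      deriv (fun s => u s x) t + deriv (fun y => pres γ (v t y)) x =
        deriv (fun y => (b * (v t y) ^ (-α) / v t y) * deriv (fun z => u t z) y) x)
    (h : ℝ → ℝ → ℝ)
    (hdef : ∀ t x, h t x = u t x + (b / α) * deriv (fun y => (v t y) ^ (-α)) x) :
    (∀ t ∈ Set.Ioo (0 : ℝ) T, ∀ x : ℝ,
      deriv (fun s => v s x) t - deriv (fun y => h t y) x =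
        -(b / γ) * deriv (fun y => (v t y) ^ (γ - α)
            * deriv (fun z => pres γ (v t z)) y) x) ∧
    (∀ t ∈ Set.Ioo (0 : ℝ) T, ∀ x : ℝ,
      deriv (fun s => h s x) t + deriv (fun y => pres γ (v t y)) x = 0) :=
  stmt14_general γ α b T hγ hα v u hv hu hvpos heq1 heq2 h hdef
end
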